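/- Let A = (A, ≼, →, S) be an arrow algebra, and define a ⊢ b iff a → b ∈ S. Then ⊢ is a preorder on A (reflexive and transitive), ⊥ ⊢ a and a ⊢ ⊤ for all a ∈ A, and a × b := ⨅_{z ∈ A} z → ∂( z·(∂a)·(∂b) ) is a binary meet with respect to ⊢: a × b ⊢ a, a × b ⊢ b, and whenever c ⊢ a and c ⊢ b then c ⊢ a × b. -/
import Mathlib


/-- The combinator 𝐤 := ⨅ a b, a → (b → a). -/
def kC {A : Type*} [CompleteLattice A] (arr : A → A → A) : A :=
  ⨅ (a : A) (b : A), arr a (arr b a)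

/-- The combinator 𝐬 := ⨅ a b c, (a → (b → c)) → ((a → b) → (a → c)). -/
def sC {A : Type*} [CompleteLattice A] (arr : A → A → A) : A :=
  ⨅ (a : A) (b : A) (c : A),
    arr (arr a (arr b c)) (arr (arr a b) (arr a c))

/-- The combinator 𝐚 := ⨅_{x, B ⊆ Im(→)} (⨅_{b ∈ B} x → b) → (x → ⨅ B). -/
def aC {A : Type*} [CompleteLattice A] (arr : A → A → A) : A :=
  ⨅ (x : A) (B : Set A) (_ : B ⊆ Set.range fun p : A × A => arr p.1 p.2),
    arr (⨅ b ∈ B, arr x b) (arr x (sInf B))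

/-- An arrow structure on a complete lattice: the implication is antitone in its
first argument and monotone in its second. -/
structure IsArrow {A : Type*} [CompleteLattice A] (arr : A → A → A) : Prop where
  mono : ∀ {a a' b b' : A}, a' ≤ a → b ≤ b' → arr a b ≤ arr a' b'

/-- A separator on an arrow structure. -/
structure IsSeparator {A : Type*} [CompleteLattice A] (arr : A → A → A) (S : Set A) : Prop where
  up : ∀ {a b : A}, a ∈ S → a ≤ b → b ∈ S
  mp : ∀ {a b : A}, arr a b ∈ S → a ∈ S → b ∈ S
  kmem : kC arr ∈ S
  smem : sC arr ∈ S
  amem : aC arr ∈ S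

/-- Application in an arrow structure: `a·b := ⨅ { c → d | a ≼ b → (c → d) }`. -/
def appA {A : Type*} [CompleteLattice A] (arr : A → A → A) (a b : A) : A :=
  sInf {e | ∃ c d : A, e = arr c d ∧ a ≤ arr b (arr c d)}

/-- `∂a := ⊤ → a`. -/
def pd {A : Type*} [CompleteLattice A] (arr : A → A → A) (a : A) : A := arr ⊤ a

/-- Abstraction in an arrow structure: `λf := ⨅ x, x → ∂(f x)`. -/
def lamA {A : Type*} [CompleteLattice A] (arr : A → A → A) (f : A → A) : A :=
  ⨅ x : A, arr x (pd arr (f x))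

/-- The logical preorder: `a ⊢ b` iff `a → b ∈ S`. -/
def entails {A : Type*} [CompleteLattice A] (arr : A → A → A) (S : Set A) (a b : A) : Prop :=
  arr a b ∈ S

/-- The logical conjunction: `a × b := ⨅ z, z → ∂(z·(∂a)·(∂b))`. -/
def meetA {A : Type*} [CompleteLattice A] (arr : A → A → A) (a b : A) : A :=
  ⨅ z : A, arr z (pd arr (appA arr (appA arr z (pd arr a)) (pd arr b)))

section Aux
variable {A : Type*} [CompleteLattice A] {arr : A → A → A} {S : Set A}

lemma kLe (x y : A) : kC arr ≤ arr x (arr y x) :=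
  le_trans (iInf_le _ x) (iInf_le _ y)

lemma sLe (x y z : A) :
    sC arr ≤ arr (arr x (arr y z)) (arr (arr x y) (arr x z)) :=
  le_trans (iInf_le _ x) (le_trans (iInf_le _ y) (iInf_le _ z))

lemma aLe (x : A) (B : Set A) (hB : B ⊆ Set.range fun p : A × A => arr p.1 p.2) :
    aC arr ≤ arr (⨅ b ∈ B, arr x b) (arr x (sInf B)) :=
  le_trans (iInf_le _ x) (le_trans (iInf_le _ B) (iInf_le _ hB))

lemma appA_le {x y c d : A} (h : x ≤ arr y (arr c d)) :
    appA arr x y ≤ arr c d :=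
  sInf_le ⟨c, d, rfl, h⟩

lemma mpB (hA : IsArrow arr) {t₁ t₂ φ c d : A} (h1 : t₁ ≤ arr φ (arr c d))
    (h2 : t₂ ≤ φ) : appA arr t₁ t₂ ≤ arr c d :=
  sInf_le ⟨c, d, rfl, le_trans h1 (hA.mono h2 le_rfl)⟩

lemma aC_le_app (hA : IsArrow arr) (x y : A) :
    aC arr ≤ arr x (arr y (appA arr x y)) := by
  have hB : {e | ∃ c d : A, e = arr c d ∧ x ≤ arr y (arr c d)} ⊆
      Set.range fun p : A × A => arr p.1 p.2 := by
    rintro e ⟨c, d, rfl, -⟩; exact ⟨(c, d), rfl⟩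
  refine le_trans (aLe y _ hB) (hA.mono ?_ le_rfl)
  refine le_iInf fun e => le_iInf fun he => ?_
  obtain ⟨c, d, rfl, h⟩ := he
  exact h

lemma app_mem (hA : IsArrow arr) (hS : IsSeparator arr S) {x y : A}
    (hx : x ∈ S) (hy : y ∈ S) : appA arr x y ∈ S := by
  have hB : {e | ∃ c d : A, e = arr c d ∧ x ≤ arr y (arr c d)} ⊆
      Set.range fun p : A × A => arr p.1 p.2 := by
    rintro e ⟨c, d, rfl, -⟩; exact ⟨(c, d), rfl⟩
  have h1 : (⨅ b ∈ {e | ∃ c d : A, e = arr c d ∧ x ≤ arr y (arr c d)}, arr y b) ∈ S := by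
    refine hS.up hx (le_iInf₂ fun e he => ?_)
    obtain ⟨c, d, rfl, h⟩ := he; exact h
  have h2 := hS.up hS.amem (aLe y _ hB)
  exact hS.mp (hS.mp h2 h1) hy

lemma refl_mem (hS : IsSeparator arr S) (x : A) : arr x x ∈ S := by
  have hP : arr x (arr (arr ⊤ x) x) ∈ S := hS.up hS.kmem (kLe x _)
  have hSg : arr (arr x (arr (arr ⊤ x) x)) (arr (arr x (arr ⊤ x)) (arr x x)) ∈ S :=
    hS.up hS.smem (sLe x _ x)
  have hQ : arr x (arr ⊤ x) ∈ S := hS.up hS.kmem (kLe x ⊤)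
  exact hS.mp (hS.mp hSg hP) hQ

lemma le_ent (hA : IsArrow arr) (hS : IsSeparator arr S) {x y : A} (h : x ≤ y) :
    arr x y ∈ S :=
  hS.up (refl_mem hS y) (hA.mono h le_rfl)

lemma trans_mem (hS : IsSeparator arr S) {x y z : A}
    (h1 : arr x y ∈ S) (h2 : arr y z ∈ S) : arr x z ∈ S := by
  have h3 : arr x (arr y z) ∈ S := hS.mp (hS.up hS.kmem (kLe (arr y z) x)) h2
  have hSg := hS.up hS.smem (sLe x y z)
  exact hS.mp (hS.mp hSg h3) h1

lemma cancel (hS : IsSeparator arr S) {x u w : A} (hu : u ∈ S)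
    (h : arr x (arr u w) ∈ S) : arr x w ∈ S := by
  have hSg := hS.up hS.smem (sLe x u w)
  have h2 := hS.mp hSg h
  have h3 : arr x u ∈ S := hS.mp (hS.up hS.kmem (kLe u x)) hu
  exact hS.mp h2 h3

lemma pd_ent (hS : IsSeparator arr S) (x : A) : arr (pd arr x) x ∈ S := by
  have htop : (⊤ : A) ∈ S := hS.up hS.kmem le_top
  exact cancel hS htop (refl_mem hS (pd arr x))

lemma ent_pd (hS : IsSeparator arr S) (x : A) : arr x (pd arr x) ∈ S :=
  hS.up hS.kmem (kLe x ⊤)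


lemma mp2 (hA : IsArrow arr) (hS : IsSeparator arr S) {c t₁ t₂ : A} {φ ψ : A → A}
    (m₁ : t₁ ∈ S) (m₂ : t₂ ∈ S)
    (h₁ : ∀ z, t₁ ≤ arr c (arr z (arr (φ z) (ψ z))))
    (h₂ : ∀ z, t₂ ≤ arr c (arr z (φ z))) :
    ∃ t ∈ S, ∀ z, t ≤ arr c (arr z (ψ z)) := by
  set K := kC arr with hK
  set Sc := sC arr with hSc
  refine ⟨appA arr (appA arr Sc (appA arr (appA arr Sc (appA arr K Sc)) t₁)) t₂,
    app_mem hA hS (app_mem hA hS hS.smem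
      (app_mem hA hS (app_mem hA hS hS.smem (app_mem hA hS hS.kmem hS.smem)) m₁)) m₂,
    fun z => ?_⟩
  have b₁ : appA arr K Sc ≤
      arr c (arr (arr z (arr (φ z) (ψ z))) (arr (arr z (φ z)) (arr z (ψ z)))) :=
    mpB hA (kLe _ c) (sLe z (φ z) (ψ z))
  have b₂ : appA arr Sc (appA arr K Sc) ≤
      arr (arr c (arr z (arr (φ z) (ψ z))))
        (arr c (arr (arr z (φ z)) (arr z (ψ z)))) :=
    mpB hA (sLe c _ _) b₁
  have b₃ : appA arr (appA arr Sc (appA arr K Sc)) t₁ ≤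
      arr c (arr (arr z (φ z)) (arr z (ψ z))) :=
    mpB hA b₂ (h₁ z)
  have b₄ : appA arr Sc (appA arr (appA arr Sc (appA arr K Sc)) t₁) ≤
      arr (arr c (arr z (φ z))) (arr c (arr z (ψ z))) :=
    mpB hA (sLe c _ _) b₃
  exact mpB hA b₄ (h₂ z)

lemma const2 (hA : IsArrow arr) (hS : IsSeparator arr S) {c x t : A}
    (ht : t ∈ S) (hb : t ≤ arr c x) :
    ∃ t' ∈ S, ∀ z : A, t' ≤ arr c (arr z x) := by
  set K := kC arr
  set Sc := sC arr
  refine ⟨appA arr (appA arr Sc (appA arr K K)) t,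
    app_mem hA hS (app_mem hA hS hS.smem (app_mem hA hS hS.kmem hS.kmem)) ht,
    fun z => ?_⟩
  have b₁ : appA arr K K ≤ arr c (arr x (arr z x)) :=
    mpB hA (kLe _ c) (kLe x z)
  have b₂ : appA arr Sc (appA arr K K) ≤ arr (arr c x) (arr c (arr z x)) :=
    mpB hA (sLe c x (arr z x)) b₁
  exact mpB hA b₂ hb

lemma lift2 (hA : IsArrow arr) (hS : IsSeparator arr S) {c t : A} {ψ : A → A}
    (ht : t ∈ S) (hb : ∀ z, t ≤ ψ z) :
    ∃ t' ∈ S, ∀ z, t' ≤ arr c (arr z (ψ z)) := by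
  set K := kC arr
  refine ⟨appA arr K (appA arr K t),
    app_mem hA hS hS.kmem (app_mem hA hS hS.kmem ht), fun z => ?_⟩
  have b₁ : appA arr K t ≤ arr z (ψ z) := mpB hA (kLe (ψ z) z) (hb z)
  exact mpB hA (kLe (arr z (ψ z)) c) b₁

lemma lift_z (hA : IsArrow arr) (hS : IsSeparator arr S) {c t : A} {ψ : A → A}
    (ht : t ∈ S) (hb : ∀ z, t ≤ arr z (ψ z)) :
    ∃ t' ∈ S, ∀ z, t' ≤ arr c (arr z (ψ z)) :=
  ⟨appA arr (kC arr) t, app_mem hA hS hS.kmem ht,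
    fun z => mpB hA (kLe (arr z (ψ z)) c) (hb z)⟩

lemma fst_mem (hA : IsArrow arr) (hS : IsSeparator arr S) (a b : A) :
    arr (meetA arr a b) a ∈ S := by
  set K := kC arr with hK
  have h1 : meetA arr a b ≤
      arr K (pd arr (appA arr (appA arr K (pd arr a)) (pd arr b))) :=
    iInf_le _ K
  have h2 : appA arr K (pd arr a) ≤ arr (pd arr b) (pd arr a) :=
    appA_le (kLe (pd arr a) (pd arr b))
  have h3 : appA arr (appA arr K (pd arr a)) (pd arr b) ≤ pd arr a :=
    appA_le (show appA arr K (pd arr a) ≤ arr (pd arr b) (arr ⊤ a) from h2)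
  have h4 : meetA arr a b ≤ arr K (pd arr (pd arr a)) :=
    le_trans h1 (hA.mono le_rfl (hA.mono le_rfl h3))
  have h5 : arr (meetA arr a b) (pd arr (pd arr a)) ∈ S :=
    cancel hS hS.kmem (le_ent hA hS h4)
  exact trans_mem hS h5 (trans_mem hS (pd_ent hS (pd arr a)) (pd_ent hS a))

lemma snd_mem (hA : IsArrow arr) (hS : IsSeparator arr S) (a b : A) :
    arr (meetA arr a b) b ∈ S := by
  set z₂ := arr (pd arr a) (arr (pd arr b) (pd arr b)) with hz₂
  have hz₂S : z₂ ∈ S := by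
    have hr : arr (pd arr b) (pd arr b) ∈ S := refl_mem hS (pd arr b)
    exact hS.mp (hS.up hS.kmem (kLe (arr (pd arr b) (pd arr b)) (pd arr a))) hr
  have h1 : meetA arr a b ≤
      arr z₂ (pd arr (appA arr (appA arr z₂ (pd arr a)) (pd arr b))) :=
    iInf_le _ z₂
  have h2 : appA arr z₂ (pd arr a) ≤ arr (pd arr b) (pd arr b) :=
    appA_le (le_of_eq hz₂)
  have h3 : appA arr (appA arr z₂ (pd arr a)) (pd arr b) ≤ pd arr b :=
    appA_le (show appA arr z₂ (pd arr a) ≤ arr (pd arr b) (arr ⊤ b) from h2)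
  have h4 : meetA arr a b ≤ arr z₂ (pd arr (pd arr b)) :=
    le_trans h1 (hA.mono le_rfl (hA.mono le_rfl h3))
  have h5 : arr (meetA arr a b) (pd arr (pd arr b)) ∈ S :=
    cancel hS hz₂S (le_ent hA hS h4)
  exact trans_mem hS h5 (trans_mem hS (pd_ent hS (pd arr b)) (pd_ent hS b))

lemma pair_mem (hA : IsArrow arr) (hS : IsSeparator arr S) {a b c : A}
    (ha : arr c a ∈ S) (hb : arr c b ∈ S) :
    arr c (meetA arr a b) ∈ S := by
  have hu : arr c (pd arr a) ∈ S := trans_mem hS ha (ent_pd hS a)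
  have hv : arr c (pd arr b) ∈ S := trans_mem hS hb (ent_pd hS b)
  set e : A → A := fun z => appA arr (appA arr z (pd arr a)) (pd arr b) with he
  obtain ⟨t₁, m₁, b₁⟩ := lift_z (c := c)
    (ψ := fun z => arr (pd arr a) (appA arr z (pd arr a))) hA hS hS.amem
    (fun z => aC_le_app hA z (pd arr a))
  obtain ⟨t₂, m₂, b₂⟩ := const2 (c := c) hA hS hu le_rfl
  obtain ⟨t₃, m₃, b₃⟩ := mp2 (φ := fun _ => pd arr a)
    (ψ := fun z => appA arr z (pd arr a)) hA hS m₁ m₂ b₁ b₂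
  obtain ⟨t₄, m₄, b₄⟩ := lift2 (c := c)
    (ψ := fun z => arr (appA arr z (pd arr a)) (arr (pd arr b) (e z))) hA hS hS.amem
    (fun z => aC_le_app hA (appA arr z (pd arr a)) (pd arr b))
  obtain ⟨t₅, m₅, b₅⟩ := mp2 (φ := fun z => appA arr z (pd arr a))
    (ψ := fun z => arr (pd arr b) (e z)) hA hS m₄ m₃ b₄ b₃
  obtain ⟨t₆, m₆, b₆⟩ := const2 (c := c) hA hS hv le_rfl
  obtain ⟨t₇, m₇, b₇⟩ := mp2 (φ := fun _ => pd arr b) (ψ := e) hA hS m₅ m₆ b₅ b₆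
  obtain ⟨t₈, m₈, b₈⟩ := lift2 (c := c)
    (ψ := fun z => arr (e z) (pd arr (e z))) hA hS hS.kmem
    (fun z => kLe (e z) ⊤)
  obtain ⟨t₉, m₉, b₉⟩ := mp2 (φ := e) (ψ := fun z => pd arr (e z)) hA hS m₈ m₇ b₈ b₇
  -- t₉ ∈ S and t₉ ≤ arr c (arr z (pd (e z))) for all z
  have hB : Set.range (fun z => arr z (pd arr (e z))) ⊆
      Set.range fun p : A × A => arr p.1 p.2 := by
    rintro x ⟨z, rfl⟩; exact ⟨(z, pd arr (e z)), rfl⟩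
  have hT : (⨅ x ∈ Set.range (fun z => arr z (pd arr (e z))), arr c x) ∈ S := by
    refine hS.up m₉ (le_iInf₂ fun x hx => ?_)
    obtain ⟨z, rfl⟩ := hx
    exact b₉ z
  have haC := hS.up hS.amem (aLe c _ hB)
  have : arr c (sInf (Set.range fun z => arr z (pd arr (e z)))) ∈ S :=
    hS.mp haC hT
  rwa [sInf_range] at this

end Aux

/-- Proposition 5.1 (part): `⊢` is a bounded preorder and `×` is a binary meet. -/
theorem stmt14 {A : Type*} [CompleteLattice A] {arr : A → A → A} {S : Set A}
    (hA : IsArrow arr) (hS : IsSeparator arr S) :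
    (∀ a : A, entails arr S a a) ∧
    (∀ a b c : A, entails arr S a b → entails arr S b c → entails arr S a c) ∧
    (∀ a : A, entails arr S ⊥ a) ∧
    (∀ a : A, entails arr S a ⊤) ∧
    (∀ a b : A, entails arr S (meetA arr a b) a) ∧
    (∀ a b : A, entails arr S (meetA arr a b) b) ∧
    (∀ a b c : A, entails arr S c a → entails arr S c b →
      entails arr S c (meetA arr a b)) := by
  refine ⟨fun a => refl_mem hS a,
    fun a b c h1 h2 => trans_mem hS h1 h2,
    fun a => le_ent hA hS bot_le,
    fun a => le_ent hA hS le_top,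
    fun a b => fst_mem hA hS a b,
    fun a b => snd_mem hA hS a b,
    fun a b c h1 h2 => pair_mem hA hS h1 h2⟩
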